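/- arXiv:1901.09028 — 2 statements merged into one kernel-verified Lean document; each statement's English description precedes it below -/
import Mathlib

section
/- Let T be an automorphism of a probability space (X, μ), let P ⊆ ℕ be infinite, let (S_k)_{k ∈ ℕ} be a sequence of elements of H_P(T), and let R be an automorphism of (X, μ) for which there exists a measurable function κ : X → ℕ with R(x) = S_{κ(x)}(x) for μ-almost every x. Then R ∈ H_P(T). In particular, H_P(T) coincides with its full group. -/
open MeasureTheory Filter Topology
open scoped symmDiff ENNReal

/-!
Write `Eₙ = Tⁿ R T⁻ⁿ` and `Gₙ,ₖ = Tⁿ Sₖ T⁻ⁿ`. Outside the `T⁻ⁿ`-preimage of the set `Z_K` where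
`κ ≥ K` or `R ≠ S_κ`, the map `Eₙ` coincides with one of the finitely many `Gₙ,ₖ`, `k < K`, so
`μ(Eₙ A ∆ A) ≤ ∑_{k<K} μ(Gₙ,ₖ A ∆ A) + μ(Z_K)`. The sum tends to `0` along `P`, and `μ(Z_K) → 0`
as `K → ∞` because `μ` is finite and `R = S_κ` almost everywhere.
-/

/-- The `P`-homoclinic group `H_P(T)` of an automorphism `T` of `(X, μ)`:
all measure-preserving automorphisms `S` such that for every measurable `A`,
`μ((Tⁿ ∘ S ∘ T⁻ⁿ)(A) ∆ A) → 0` as `n → ∞` along `n ∈ P`. -/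
def Homoclinic {X : Type*} [MeasurableSpace X] (μ : Measure X) (T : X ≃ᵐ X) (P : Set ℕ) :
    Set (X ≃ᵐ X) :=
  {S | MeasurePreserving (⇑S) μ μ ∧ ∀ A : Set X, MeasurableSet A →
    ∀ ε : ℝ≥0∞, 0 < ε → ∃ N : ℕ, ∀ n ∈ P, N ≤ n →
      μ (((fun x => (⇑T)^[n] (S ((⇑T.symm)^[n] x))) '' A) ∆ A) < ε}

namespace Equiv.Perm

variable {α ι : Type*}

theorem image_symmDiff_subset {e : Perm α} {g : ι → Perm α} {c : α → ι} {s : Finset ι}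
    {W : Set α} (h : ∀ y ∉ W, c y ∈ s ∧ e y = g (c y) y) (A : Set α) :
    (e '' A) ∆ A ⊆ (⋃ i ∈ s, (g i '' A) ∆ A) ∪ ⇑e⁻¹ ⁻¹' W := by
  intro x hx
  obtain ⟨y, rfl⟩ := e.surjective x
  rw [Set.mem_union, Set.mem_preimage, inv_def, symm_apply_apply]
  by_cases hy : y ∈ W
  · exact Or.inr hy
  obtain ⟨hcs, hey⟩ := h y hy
  refine Or.inl (Set.mem_biUnion hcs ?_)
  rw [Set.mem_symmDiff, e.injective.mem_set_image, hey] at hx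
  rwa [Set.mem_symmDiff, hey, (g (c y)).injective.mem_set_image]

theorem conj_image_symmDiff_subset {σ ρ : Perm α} {g : ι → Perm α} {c : α → ι} {s : Finset ι}
    {Z : Set α} (h : ∀ u ∉ Z, c u ∈ s ∧ ρ u = g (c u) u) (A : Set α) :
    (MulAut.conj σ ρ '' A) ∆ A ⊆
      (⋃ i ∈ s, (MulAut.conj σ (g i) '' A) ∆ A) ∪ ⇑(ρ⁻¹ * σ⁻¹) ⁻¹' Z := by
  have hcoe : ⇑(ρ⁻¹ * σ⁻¹) = ⇑σ⁻¹ ∘ ⇑(MulAut.conj σ ρ)⁻¹ := by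
    rw [← coe_mul, MulAut.conj_apply]
    group
  rw [hcoe, Set.preimage_comp]
  refine image_symmDiff_subset (c := c ∘ ⇑σ⁻¹) (fun y hy => ?_) A
  obtain ⟨hcs, hρ⟩ := h (σ⁻¹ y) hy
  refine ⟨hcs, ?_⟩
  simp only [MulAut.conj_apply, coe_mul, Function.comp_apply, hρ]

end Equiv.Perm

theorem MeasurableEquiv.coe_toEquiv_pow_inv {X : Type*} [MeasurableSpace X] (T : X ≃ᵐ X)
    (n : ℕ) : ⇑(T.toEquiv ^ n)⁻¹ = (⇑T.symm)^[n] := by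
  rw [← inv_pow, Equiv.Perm.coe_pow]
  rfl

theorem MeasurableEquiv.coe_conj_toEquiv_pow {X : Type*} [MeasurableSpace X] (T S : X ≃ᵐ X)
    (n : ℕ) :
    ⇑(MulAut.conj (T.toEquiv ^ n) S.toEquiv) = fun x => (⇑T)^[n] (S ((⇑T.symm)^[n] x)) := by
  rw [MulAut.conj_apply, Equiv.Perm.coe_mul, Equiv.Perm.coe_mul, Equiv.Perm.coe_pow,
    coe_toEquiv_pow_inv]
  rfl

theorem mem_homoclinic_iff {X : Type*} [MeasurableSpace X] {μ : Measure X} {T S : X ≃ᵐ X}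
    {P : Set ℕ} :
    S ∈ Homoclinic μ T P ↔ MeasurePreserving (⇑S) μ μ ∧ ∀ A : Set X, MeasurableSet A →
      Tendsto (fun n => μ ((MulAut.conj (T.toEquiv ^ n) S.toEquiv '' A) ∆ A))
        (atTop ⊓ 𝓟 P) (𝓝 0) := by
  refine and_congr_right' (forall₂_congr fun A _ => ?_)
  simp only [MeasurableEquiv.coe_conj_toEquiv_pow, tendsto_order, not_lt_zero, false_imp_iff,
    implies_true, true_and, eventually_inf_principal, eventually_atTop]
  exact forall₂_congr fun ε _ => exists_congr fun N => forall_congr' fun n => Imp.swap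

theorem tendsto_measure_setOf_le_atTop {X : Type*} [MeasurableSpace X] {μ : Measure X}
    [IsFiniteMeasure μ] {κ : X → ℕ} (hκ : AEMeasurable κ μ) :
    Tendsto (fun K => μ {x | K ≤ κ x}) atTop (𝓝 0) := by
  have h := tendsto_measure_iInter_atTop (μ := μ) (s := fun K => {x | K ≤ κ x})
    (fun K => hκ.nullMeasurable measurableSet_Ici) (fun _ _ hab _ hx => hab.trans hx)
    ⟨0, measure_ne_top μ _⟩
  have hempty : ⋂ K, {x | K ≤ κ x} = ∅ :=
    Set.eq_empty_of_forall_notMem fun x hx =>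
      (Set.mem_iInter.1 hx (κ x + 1)).not_gt (lt_add_one (κ x))
  rwa [hempty, measure_empty] at h

theorem statement1_general {X : Type*} [MeasurableSpace X] (μ : Measure X) [IsProbabilityMeasure μ]
    (T : X ≃ᵐ X) (hT : MeasurePreserving (⇑T) μ μ)
    (P : Set ℕ)
    (S : ℕ → X ≃ᵐ X) (hS : ∀ k, S k ∈ Homoclinic μ T P)
    (R : X ≃ᵐ X) (hR : MeasurePreserving (⇑R) μ μ)
    (κ : X → ℕ) (hκ : Measurable κ)
    (hRS : ∀ᵐ x ∂μ, R x = S (κ x) x) :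
    R ∈ Homoclinic μ T P := by
  refine mem_homoclinic_iff.2 ⟨hR, fun A hA => ENNReal.tendsto_nhds_zero.2 fun ε hε => ?_⟩
  have hε2 : 0 < ε / 2 := ENNReal.half_pos hε.ne'
  obtain ⟨K, hK⟩ := (ENNReal.tendsto_nhds_zero.1
    (tendsto_measure_setOf_le_atTop (hκ.aemeasurable (μ := μ))) (ε / 2) hε2).exists
  set Z := {x | K ≤ κ x} ∪ {x | ¬ R x = S (κ x) x}
  have hZ : μ Z ≤ ε / 2 := by
    calc μ Z ≤ μ {x | K ≤ κ x} + μ {x | ¬ R x = S (κ x) x} := measure_union_le _ _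
      _ ≤ ε / 2 := by rw [ae_iff.1 hRS, add_zero]; exact hK
  have hsplit : ∀ u ∉ Z, κ u ∈ Finset.range K ∧ R.toEquiv u = (S (κ u)).toEquiv u := by
    intro u hu
    simp only [Z, Set.mem_union, Set.mem_ofPred_eq, not_or, not_le, not_not] at hu
    exact ⟨Finset.mem_range.2 hu.1, hu.2⟩
  have hsum := tendsto_finsetSum (Finset.range K) fun k _ => (mem_homoclinic_iff.1 (hS k)).2 A hA
  rw [Finset.sum_const_zero] at hsum
  filter_upwards [ENNReal.tendsto_nhds_zero.1 hsum (ε / 2) hε2] with n hn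
  -- `Z` need not be measurable: `measure_preimage_le` bounds outer measures.
  have hbad : MeasurePreserving ⇑(R.toEquiv⁻¹ * (T.toEquiv ^ n)⁻¹) μ μ := by
    rw [Equiv.Perm.coe_mul, MeasurableEquiv.coe_toEquiv_pow_inv]
    exact (hR.symm R).comp ((hT.symm T).iterate n)
  calc _ ≤ μ ((⋃ k ∈ Finset.range K, (MulAut.conj (T.toEquiv ^ n) (S k).toEquiv '' A) ∆ A) ∪
          ⇑(R.toEquiv⁻¹ * (T.toEquiv ^ n)⁻¹) ⁻¹' Z) :=
        measure_mono (Equiv.Perm.conj_image_symmDiff_subset hsplit A)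
    _ ≤ ∑ k ∈ Finset.range K, μ ((MulAut.conj (T.toEquiv ^ n) (S k).toEquiv '' A) ∆ A) + μ Z :=
        (measure_union_le _ _).trans
          (add_le_add (measure_biUnion_finset_le _ _) (hbad.measure_preimage_le Z))
    _ ≤ ε / 2 + ε / 2 := add_le_add hn hZ
    _ = ε := ENNReal.add_halves ε

/-- If `R` is an automorphism obtained by piecing together countably many elements
`S_k ∈ H_P(T)` via a measurable index function `κ`, then `R ∈ H_P(T)`:
`H_P(T)` coincides with its full group. -/
theorem statement1 {X : Type*} [MeasurableSpace X] (μ : Measure X) [IsProbabilityMeasure μ]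
    (T : X ≃ᵐ X) (hT : MeasurePreserving (⇑T) μ μ)
    (P : Set ℕ) (hP : P.Infinite)
    (S : ℕ → X ≃ᵐ X) (hS : ∀ k, S k ∈ Homoclinic μ T P)
    (R : X ≃ᵐ X) (hR : MeasurePreserving (⇑R) μ μ)
    (κ : X → ℕ) (hκ : Measurable κ)
    (hRS : ∀ᵐ x ∂μ, R x = S (κ x) x) :
    R ∈ Homoclinic μ T P :=
  statement1_general μ T hT P S hS R hR κ hκ hRS
end

section
/- Let (X, μ) be a σ-finite measure space and T a bimeasurable bijection of X preserving μ, such that the only f ∈ L²(X, μ) with f ∘ T = f μ-almost everywhere is f = 0. Then for all measurable sets A and B with μ(A) < ∞ and μ(B) < ∞, (1/N) ∑_{i=1}^{N} μ(Tⁱ(A) ∩ B) → 0 as N → ∞. -/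
open MeasureTheory Filter Topology Function
open scoped ENNReal

/-!
Let `U` be the Koopman operator `f ↦ f ∘ T⁻¹` on `L²(μ)`, so that `Uⁱ 1_A = 1_{Tⁱ(A)}` and
`⟪Uⁱ 1_A, 1_B⟫ = μ(Tⁱ(A) ∩ B)`. Since `U` is an isometry whose only fixed point is `0`, the von
Neumann mean ergodic theorem makes the Cesàro averages of `Uⁱ 1_A` tend to `0` in `L²`; pairing
with `1_B` gives the claim.
-/

theorem birkhoffSum_apply_eq_sum_Icc {α M : Type*} [AddCommMonoid M] (f : α → α) (g : α → M)
    (n : ℕ) (x : α) : birkhoffSum f g n (f x) = ∑ i ∈ Finset.Icc 1 n, g (f^[i] x) := by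
  rw [← Finset.Ico_add_one_right_eq_Icc, Finset.sum_Ico_eq_sum_range, birkhoffSum]
  simp only [Nat.add_sub_cancel, add_comm 1, iterate_succ_apply]

theorem ContinuousLinearMap.tendsto_birkhoffAverage_zero {𝕜 E : Type*} [RCLike 𝕜]
    [NormedAddCommGroup E] [InnerProductSpace 𝕜 E] [CompleteSpace E] (f : E →L[𝕜] E)
    (hf : ‖f‖ ≤ 1) (hfix : ∀ y, IsFixedPt f y → y = 0) (x : E) :
    Tendsto (birkhoffAverage 𝕜 f _root_.id · x) atTop (𝓝 0) := by
  have h := f.tendsto_birkhoffAverage_orthogonalProjection hf x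
  set v := (f.eqLocus (1 : E →L[𝕜] E)).orthogonalProjectionOnto x
  rwa [hfix v (LinearMap.mem_eqLocus.mp v.2)] at h

section Koopman

variable {X : Type*} [MeasurableSpace X] {μ : Measure X}

theorem MeasureTheory.Lp.inner_compMeasurePreserving_iterate_indicatorConstLp_one
    {f : X → X} (hf : MeasurePreserving f μ μ) {s t : Set X} (hs : MeasurableSet s)
    (ht : MeasurableSet t) (hμs : μ s ≠ ∞) (hμt : μ t ≠ ∞) (n : ℕ) :
    inner ℝ ((compMeasurePreserving f hf)^[n] (indicatorConstLp 2 hs hμs (1 : ℝ)))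
      (indicatorConstLp 2 ht hμt (1 : ℝ)) = μ.real (f^[n] ⁻¹' s ∩ t) := by
  rw [compMeasurePreserving_iterate, indicatorConstLp_compMeasurePreserving]
  exact L2.inner_indicatorConstLp_one_indicatorConstLp_one _ _ _ _

theorem MeasureTheory.Lp.eq_zero_of_isFixedPt_compMeasurePreserving_symm {E : Type*}
    [NormedAddCommGroup E] {p : ℝ≥0∞} {T : X ≃ᵐ X} (hT : MeasurePreserving T μ μ)
    (hinv : ∀ f : X → E, MemLp f p μ → (fun x => f (T x)) =ᵐ[μ] f → f =ᵐ[μ] 0)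
    {w : Lp E p μ} (hw : IsFixedPt (compMeasurePreserving T.symm (hT.symm T)) w) : w = 0 := by
  have hw_symm : w ∘ T.symm =ᵐ[μ] w := by
    have h := coeFn_compMeasurePreserving w (hT.symm T)
    rw [hw.eq] at h
    exact h.symm
  have hw_inv : (fun x => w (T x)) =ᵐ[μ] w := by
    have h := hw_symm.comp_tendsto hT.quasiMeasurePreserving.tendsto_ae
    simp only [comp_def, MeasurableEquiv.symm_apply_apply] at h
    exact h.symm
  exact eq_zero_iff_ae_eq_zero.mpr (hinv w (Lp.memLp w) hw_inv)

end Koopman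

theorem statement9_general {X : Type*} [MeasurableSpace X] (μ : Measure X)
    (T : X ≃ᵐ X) (hT : MeasurePreserving (⇑T) μ μ)
    (hcont : ∀ f : X → ℝ, MemLp f 2 μ → (fun x => f (T x)) =ᵐ[μ] f → f =ᵐ[μ] 0)
    (A B : Set X) (hA : MeasurableSet A) (hB : MeasurableSet B)
    (hAfin : μ A < ∞) (hBfin : μ B < ∞) :
    Tendsto (fun N : ℕ =>
        (N : ℝ)⁻¹ * ∑ i ∈ Finset.Icc 1 N, (μ ((⇑T)^[i] '' A ∩ B)).toReal)
      atTop (𝓝 0) := by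
  have hTs := hT.symm T
  set U := (Lp.compMeasurePreservingₗᵢ (E := ℝ) (p := 2) ℝ T.symm hTs).toContinuousLinearMap
  set f := indicatorConstLp 2 hA hAfin.ne (1 : ℝ)
  set g := indicatorConstLp 2 hB hBfin.ne (1 : ℝ)
  have hcesaro : Tendsto (birkhoffAverage ℝ U _root_.id · (U f)) atTop (𝓝 0) :=
    U.tendsto_birkhoffAverage_zero (LinearIsometry.norm_toContinuousLinearMap_le _)
      (fun _ hw => Lp.eq_zero_of_isFixedPt_compMeasurePreserving_symm hT hcont hw) _
  have hpair := hcesaro.inner (𝕜 := ℝ) (tendsto_const_nhds (x := g))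
  rw [inner_zero_left] at hpair
  refine hpair.congr fun N => ?_
  simp only [birkhoffAverage, birkhoffSum_apply_eq_sum_Icc, real_inner_smul_left, sum_inner,
    id_eq]
  congr 1
  refine Finset.sum_congr rfl fun i _ => ?_
  rw [Set.image_eq_preimage_of_inverse (LeftInverse.iterate T.symm_apply_apply i)
    (RightInverse.iterate T.apply_symm_apply i)]
  exact Lp.inner_compMeasurePreserving_iterate_indicatorConstLp_one hTs hA hB _ _ i

/-- If `T` is a measure-preserving automorphism of a σ-finite measure space `(X, μ)`
whose only invariant `L²` function is `0`, then for all measurable `A, B` of finite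
measure the Cesàro averages `(1/N) ∑_{i=1}^{N} μ(Tⁱ(A) ∩ B)` tend to `0`. -/
theorem statement9 {X : Type*} [MeasurableSpace X] (μ : Measure X) [SigmaFinite μ]
    (T : X ≃ᵐ X) (hT : MeasurePreserving (⇑T) μ μ)
    (hcont : ∀ f : X → ℝ, MemLp f 2 μ → (fun x => f (T x)) =ᵐ[μ] f → f =ᵐ[μ] 0)
    (A B : Set X) (hA : MeasurableSet A) (hB : MeasurableSet B)
    (hAfin : μ A < ∞) (hBfin : μ B < ∞) :
    Tendsto (fun N : ℕ =>
        (N : ℝ)⁻¹ * ∑ i ∈ Finset.Icc 1 N, (μ ((⇑T)^[i] '' A ∩ B)).toReal)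
      atTop (𝓝 0) :=
  statement9_general μ T hT hcont A B hA hB hAfin hBfin
end
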